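/- Let α ∈ P be a Laurent polynomial that is not a constant. Define ϖ : W → W by ϖ(f,g) = (−g, (α+D)f). Then ϖ is an injective ℂ-linear map whose image is P × (α+D)(P), and for all m ∈ ℤ it satisfies ϖ ∘ L_m^{(α,0)} = L_m^{(α,1/2)} ∘ ϖ and ϖ ∘ G_m^{(α,0)} = G_m^{(α,1/2)} ∘ ϖ, where L_m^{(α,b)}, G_m^{(α,b)} denote the operators of M_{α,b}. Consequently ϖ is a parity-reversing isomorphism from M_{α,0} onto the submodule (P, (α+D)(P)) of M_{α,1/2}. -/

import Mathlib

/- STATEMENT 7: For α ∈ ℂ[t,t⁻¹] non-constant, ϖ(f,g) = (−g, (α+D)f) is an injective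
ℂ-linear map with image P × (α+D)(P), intertwining the operators of M_{α,0} with those
of M_{α,1/2}: ϖ ∘ L_m^{(α,0)} = L_m^{(α,1/2)} ∘ ϖ and ϖ ∘ G_m^{(α,0)} = G_m^{(α,1/2)} ∘ ϖ.
Hence ϖ is a parity-reversing isomorphism from M_{α,0} onto the submodule
(P, (α+D)(P)) of M_{α,1/2}. -/

open LaurentPolynomial

noncomputable section

abbrev Lp := LaurentPolynomial ℂ

/-- `L_m(f,g) = (t^m(α+D+mb)f, t^m(α+D+m(b+1/2))g)` -/
def Lop (D : Lp →ₗ[ℂ] Lp) (α : Lp) (b : ℂ) (m : ℤ) : Lp × Lp → Lp × Lp :=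
  fun w => (T m * (α * w.1 + D w.1 + ((m : ℂ) * b) • w.1),
            T m * (α * w.2 + D w.2 + ((m : ℂ) * (b + 1 / 2)) • w.2))

/-- `G_m(f,g) = (−t^m g, t^m(α+D+2mb)f)` -/
def Gop (D : Lp →ₗ[ℂ] Lp) (α : Lp) (b : ℂ) (m : ℤ) : Lp × Lp → Lp × Lp :=
  fun w => (-(T m * w.2), T m * (α * w.1 + D w.1 + (2 * (m : ℂ) * b) • w.1))

/-- `ϖ(f,g) = (−g, (α+D)f)` -/
def varpi (D : Lp →ₗ[ℂ] Lp) (α : Lp) : Lp × Lp → Lp × Lp :=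
  fun w => (-w.2, α * w.1 + D w.1)

/-! Up to swapping the two components and a sign, `ϖ` is `id × (α + D)`, so its linearity,
injectivity and image come down to the injectivity of `α + D`. If `(α + D) f = 0` with `f ≠ 0`,
then `α f = -D f` is supported inside the support of `f`; since the top and bottom exponents of
`α f` are those of `f` shifted by those of `α`, all exponents of `α` vanish. The intertwining
relations follow from the twisted Leibniz rule `D (tᵐ f) = m tᵐ f + tᵐ D f`, which is what
shifts `b` by `1/2`. -/

theorem UniqueAdd.of_forall_le {G : Type*} [Add G] [PartialOrder G] [AddLeftStrictMono G]
    [AddRightStrictMono G] {A B : Finset G} {a b : G} (ha : ∀ x ∈ A, x ≤ a)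
    (hb : ∀ y ∈ B, y ≤ b) : UniqueAdd A B a b :=
  fun _ _ hx hy h => (add_eq_add_iff_eq_and_eq (ha _ hx) (hb _ hy)).1 h

theorem UniqueAdd.of_forall_ge {G : Type*} [Add G] [PartialOrder G] [AddLeftStrictMono G]
    [AddRightStrictMono G] {A B : Finset G} {a b : G} (ha : ∀ x ∈ A, a ≤ x)
    (hb : ∀ y ∈ B, b ≤ y) : UniqueAdd A B a b := fun _ _ hx hy h => by
  obtain ⟨rfl, rfl⟩ := (add_eq_add_iff_eq_and_eq (ha _ hx) (hb _ hy)).1 h.symm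
  exact ⟨rfl, rfl⟩

namespace LaurentPolynomial

variable {R : Type*}

section Semiring

variable [Semiring R]

theorem coeff_T_mul (m k : ℤ) (f : R[T;T⁻¹]) : (T m * f).coeff k = f.coeff (k - m) := by
  rw [T, AddMonoidAlgebra.coeff_single_mul_apply, one_mul, neg_add_eq_sub]

theorem eq_C_of_support_subset_zero {f : R[T;T⁻¹]} (hf : f.coeff.support ⊆ {0}) :
    f = C (f.coeff 0) := by
  ext k
  rw [C_apply]
  split_ifs with hk
  · rw [hk]
  · exact Finsupp.notMem_support_iff.1 fun hmem => hk (Finset.mem_singleton.1 (hf hmem))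

variable [NoZeroDivisors R] {f g : R[T;T⁻¹]}

theorem max'_add_max'_mem_support_mul (hf : f.coeff.support.Nonempty)
    (hg : g.coeff.support.Nonempty) :
    f.coeff.support.max' hf + g.coeff.support.max' hg ∈ (f * g).coeff.support := by
  rw [Finsupp.mem_support_iff, AddMonoidAlgebra.coeff_mul_add_of_uniqueAdd
    (.of_forall_le (Finset.le_max' _) (Finset.le_max' _))]
  exact mul_ne_zero (Finsupp.mem_support_iff.1 (Finset.max'_mem _ _))
    (Finsupp.mem_support_iff.1 (Finset.max'_mem _ _))

theorem min'_add_min'_mem_support_mul (hf : f.coeff.support.Nonempty)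
    (hg : g.coeff.support.Nonempty) :
    f.coeff.support.min' hf + g.coeff.support.min' hg ∈ (f * g).coeff.support := by
  rw [Finsupp.mem_support_iff, AddMonoidAlgebra.coeff_mul_add_of_uniqueAdd
    (.of_forall_ge (Finset.min'_le _) (Finset.min'_le _))]
  exact mul_ne_zero (Finsupp.mem_support_iff.1 (Finset.min'_mem _ _))
    (Finsupp.mem_support_iff.1 (Finset.min'_mem _ _))

theorem eq_C_of_support_mul_subset {α : R[T;T⁻¹]} (hf : f ≠ 0)
    (h : (α * f).coeff.support ⊆ f.coeff.support) : α = C (α.coeff 0) := by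
  rcases eq_or_ne α 0 with rfl | hα
  · simp
  have hα' : α.coeff.support.Nonempty := by simpa using hα
  have hf' : f.coeff.support.Nonempty := by simpa using hf
  have hmax := Finset.le_max' _ _ (h (max'_add_max'_mem_support_mul hα' hf'))
  have hmin := Finset.min'_le _ _ (h (min'_add_min'_mem_support_mul hα' hf'))
  refine eq_C_of_support_subset_zero fun k hk => Finset.mem_singleton.2 ?_
  have := Finset.le_max' _ k hk
  have := Finset.min'_le _ k hk
  omega

end Semiring

variable [CommRing R]

def IsDegreeOperator (D : R[T;T⁻¹] →ₗ[R] R[T;T⁻¹]) : Prop :=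
  ∀ n : ℤ, D (T n) = (n : R) • T n

namespace IsDegreeOperator

variable {D : R[T;T⁻¹] →ₗ[R] R[T;T⁻¹]}

theorem coeff_apply (hD : IsDegreeOperator D) (f : R[T;T⁻¹]) (k : ℤ) :
    (D f).coeff k = k * f.coeff k := by
  induction f using LaurentPolynomial.induction_on' with
  | add p q hp hq =>
    simp only [map_add, AddMonoidAlgebra.coeff_add, Finsupp.add_apply, hp, hq, mul_add]
  | C_mul_T n a =>
    rw [← smul_eq_C_mul, map_smul, hD]
    simp only [AddMonoidAlgebra.coeff_smul, Finsupp.smul_apply, T_apply, smul_eq_mul]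
    split_ifs with h <;> simp [h, mul_comm]

theorem apply_T_mul (hD : IsDegreeOperator D) (m : ℤ) (f : R[T;T⁻¹]) :
    D (T m * f) = (m : R) • (T m * f) + T m * D f := by
  ext k
  simp only [AddMonoidAlgebra.coeff_add, Finsupp.add_apply, AddMonoidAlgebra.coeff_smul,
    Finsupp.smul_apply, smul_eq_mul, coeff_apply hD, coeff_T_mul]
  push_cast
  ring

theorem eq_C_of_mul_add_apply_eq_zero [NoZeroDivisors R] (hD : IsDegreeOperator D)
    {α f : R[T;T⁻¹]} (hf : f ≠ 0) (h : α * f + D f = 0) : α = C (α.coeff 0) := by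
  refine eq_C_of_support_mul_subset hf fun k hk => Finsupp.mem_support_iff.2 fun hfk => ?_
  have hk' : (α * f).coeff k + k * f.coeff k = 0 := by
    simpa only [AddMonoidAlgebra.coeff_add, Finsupp.add_apply, coeff_apply hD,
      AddMonoidAlgebra.coeff_zero, Finsupp.zero_apply] using congrArg (·.coeff k) h
  rw [hfk, mul_zero, add_zero] at hk'
  exact Finsupp.mem_support_iff.1 hk hk'

end IsDegreeOperator

end LaurentPolynomial

section Varpi

variable (D : Lp →ₗ[ℂ] Lp) (α : Lp)

theorem varpi_eq_prodMap_comp_swap :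
    varpi D α = Prod.map Neg.neg (LinearMap.mulLeft ℂ α + D) ∘ Prod.swap := rfl

theorem isLinearMap_varpi : IsLinearMap ℂ (varpi D α) :=
  ((-LinearMap.id).prodMap (LinearMap.mulLeft ℂ α + D) ∘ₗ
    (LinearEquiv.prodComm ℂ Lp Lp).toLinearMap).isLinear

theorem varpi_injective (h : Function.Injective (LinearMap.mulLeft ℂ α + D)) :
    Function.Injective (varpi D α) := by
  rw [varpi_eq_prodMap_comp_swap]
  exact (neg_injective.prodMap h).comp Prod.swap_injective

theorem range_varpi :
    Set.range (varpi D α) =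
      {w : Lp × Lp | w.2 ∈ LinearMap.range (LinearMap.mulLeft ℂ α + D)} := by
  rw [varpi_eq_prodMap_comp_swap, Prod.swap_surjective.range_comp, Set.range_prodMap,
    neg_surjective.range_eq, Set.univ_prod]
  rfl

variable {D}

theorem varpi_Lop (hD : IsDegreeOperator D) (m : ℤ) (w : Lp × Lp) :
    varpi D α (Lop D α 0 m w) = Lop D α (1 / 2) m (varpi D α w) := by
  obtain ⟨f, g⟩ := w
  simp only [Lop, varpi, Prod.mk.injEq, mul_zero, zero_add, zero_smul, add_zero, add_halves,
    mul_one, map_add, map_neg, smul_neg, hD.apply_T_mul, smul_eq_C_mul]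
  constructor <;> ring

theorem varpi_Gop (hD : IsDegreeOperator D) (m : ℤ) (w : Lp × Lp) :
    varpi D α (Gop D α 0 m w) = Gop D α (1 / 2) m (varpi D α w) := by
  obtain ⟨f, g⟩ := w
  have two_mul_half : 2 * (m : ℂ) * (1 / 2) = m := by ring
  simp only [Gop, varpi, mul_zero, zero_smul, add_zero, two_mul_half, map_neg, smul_neg,
    hD.apply_T_mul, smul_eq_C_mul]
  ext1
  · rfl
  · ring

end Varpi

theorem stmt7 (D : Lp →ₗ[ℂ] Lp)
    (hD : ∀ n : ℤ, D (T n) = (n : ℂ) • T n)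
    (α : Lp) (hα : ∀ c : ℂ, α ≠ C c) :
    IsLinearMap ℂ (varpi D α) ∧
    Function.Injective (varpi D α) ∧
    Set.range (varpi D α)
      = {w : Lp × Lp | w.2 ∈ LinearMap.range (LinearMap.mulLeft ℂ α + D)} ∧
    (∀ m : ℤ, ∀ w : Lp × Lp,
      varpi D α (Lop D α 0 m w) = Lop D α (1 / 2) m (varpi D α w)) ∧
    (∀ m : ℤ, ∀ w : Lp × Lp,
      varpi D α (Gop D α 0 m w) = Gop D α (1 / 2) m (varpi D α w)) := by
  have hD : IsDegreeOperator D := hD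
  have hinj : Function.Injective (LinearMap.mulLeft ℂ α + D) := by
    refine (injective_iff_map_eq_zero _).2 fun f hf => by_contra fun hf0 => ?_
    exact hα _ (hD.eq_C_of_mul_add_apply_eq_zero hf0 hf)
  exact ⟨isLinearMap_varpi D α, varpi_injective D α hinj, range_varpi D α, varpi_Lop α hD,
    varpi_Gop α hD⟩

end
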